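/- arXiv:1104.4130 — 6 statements merged into one kernel-verified Lean document; each statement's English description precedes it below -/
import Mathlib

section
/- Let X be a locally connected continuum and A ⊆ X a connected dense subset. Then A contains every cutpoint of X (a point x such that X \ {x} is disconnected). -/
/-- In a locally connected continuum `X`, a connected dense subset contains
every cutpoint of `X`. -/
theorem connected_dense_contains_cutpoints {X : Type*} [MetricSpace X]
    [CompactSpace X] [ConnectedSpace X] [LocallyConnectedSpace X]
    (A : Set X) (hAdense : Dense A) (hAconn : IsPreconnected A)
    (x : X) (hcut : ¬ IsPreconnected ({x}ᶜ : Set X)) :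
    x ∈ A := by
  by_contra hx
  exact hcut (hAconn.subset_closure
    (fun a ha h => hx (h ▸ ha))
    (by rw [hAdense.closure_eq]; exact Set.subset_univ _))
end

section
/- Let σ : ℝ/ℤ → ℝ/ℤ be the tripling map with arc-length metric d, and let ε > 0. Suppose x, y ∈ ℝ/ℤ satisfy |d(σⁿ(x), σⁿ(y)) − 1/3| ≥ ε for all n ≥ 0 and d(x,y) ≥ 1/4. Then d(σⁿ(x), σⁿ(y)) ≥ 3ε for all n ≥ 1. -/
open AddCircle

private lemma coe_sub_round (t : ℝ) :
    ((t : UnitAddCircle)) = ((t - round t : ℝ) : UnitAddCircle) := by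
  have : ((t - (t - round t) : ℝ) : UnitAddCircle) = 0 := by
    rw [AddCircle.coe_eq_zero_iff]
    exact ⟨round t, by simp⟩
  have h2 : ((t : ℝ) : UnitAddCircle) - ((t - round t : ℝ) : UnitAddCircle) = 0 := by
    rw [← AddCircle.coe_sub]
    convert this using 2
  exact sub_eq_zero.mp h2

private lemma exists_rep (x y : UnitAddCircle) :
    ∃ u : ℝ, |u| ≤ 1/2 ∧ dist x y = |u| ∧
      dist ((3 : ℕ) • x) ((3 : ℕ) • y) = |3*u - round (3*u)| := by
  have key : ∀ z : UnitAddCircle, ∃ u : ℝ, |u| ≤ 1/2 ∧ ‖z‖ = |u| ∧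
      ‖(3 : ℕ) • z‖ = |3*u - round (3*u)| := by
    intro z
    induction z using QuotientAddGroup.induction_on with
    | H t =>
      refine ⟨t - round t, abs_sub_round t, ?_, ?_⟩
      · rw [coe_sub_round t, AddCircle.norm_eq]
        norm_num
      · rw [coe_sub_round t, ← AddCircle.coe_nsmul, nsmul_eq_mul, AddCircle.norm_eq]
        norm_num
  obtain ⟨u, hu1, hu2, hu3⟩ := key (x - y)
  exact ⟨u, hu1, by rwa [dist_eq_norm], by rwa [dist_eq_norm, ← smul_sub]⟩

private lemma arith1 (u : ℝ) (k : ℤ) (hu : |u| ≤ 1/2) (h6 : 1/6 ≤ |u|) :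
    |3 * |u| - 1| ≤ |3*u - k| := by
  have hk : (k : ℝ) ≤ -2 ∨ (k : ℝ) = -1 ∨ (k : ℝ) = 0 ∨ (k : ℝ) = 1 ∨ 2 ≤ (k : ℝ) := by
    rcases le_or_gt k (-2) with h | h
    · exact Or.inl (by exact_mod_cast h)
    · rcases le_or_gt 2 k with h2 | h2
      · exact Or.inr (Or.inr (Or.inr (Or.inr (by exact_mod_cast h2))))
      · interval_cases k
        · exact Or.inr (Or.inl (by norm_num))
        · exact Or.inr (Or.inr (Or.inl (by norm_num)))
        · exact Or.inr (Or.inr (Or.inr (Or.inl (by norm_num))))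
  rcases abs_cases u with ⟨h1, h2⟩ | ⟨h1, h2⟩ <;>
    rcases abs_cases (3 * u - (k : ℝ)) with ⟨h3, h4⟩ | ⟨h3, h4⟩ <;>
    rcases abs_cases (3 * |u| - 1) with ⟨h5, h6'⟩ | ⟨h5, h6'⟩ <;>
    rcases hk with hk | hk | hk | hk | hk <;>
    linarith

private lemma arith2 (u : ℝ) (k : ℤ) (hu : |u| < 1/6) :
    3 * |u| ≤ |3*u - k| := by
  have hk : (k : ℝ) ≤ -1 ∨ (k : ℝ) = 0 ∨ 1 ≤ (k : ℝ) := by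
    rcases le_or_gt k (-1) with h | h
    · exact Or.inl (by exact_mod_cast h)
    · rcases le_or_gt 1 k with h2 | h2
      · exact Or.inr (Or.inr (by exact_mod_cast h2))
      · interval_cases k
        exact Or.inr (Or.inl (by norm_num))
  rcases abs_cases u with ⟨h1, h2⟩ | ⟨h1, h2⟩ <;>
    rcases abs_cases (3 * u - (k : ℝ)) with ⟨h3, h4⟩ | ⟨h3, h4⟩ <;>
    rcases hk with hk | hk | hk <;>
    linarith [abs_nonneg u]

/-- Lower bound when dist ≥ 1/6. -/
private lemma step1 (x y : UnitAddCircle) (h6 : 1/6 ≤ dist x y) :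
    |3 * dist x y - 1| ≤ dist ((3 : ℕ) • x) ((3 : ℕ) • y) := by
  obtain ⟨u, hu1, hu2, hu3⟩ := exists_rep x y
  rw [hu2] at h6 ⊢
  rw [hu3]
  exact arith1 u _ hu1 h6

/-- Lower bound when dist < 1/6. -/
private lemma step2 (x y : UnitAddCircle) (h6 : dist x y < 1/6) :
    3 * dist x y ≤ dist ((3 : ℕ) • x) ((3 : ℕ) • y) := by
  obtain ⟨u, hu1, hu2, hu3⟩ := exists_rep x y
  rw [hu2] at h6 ⊢
  rw [hu3]
  exact arith2 u _ h6

/-- If the distances of all iterates of `x, y` under the tripling map stay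
at least `ε` away from `1/3`, and `dist x y ≥ 1/4`, then all forward iterates (`n ≥ 1`)
stay at distance at least `3ε`. -/
theorem tripling_dist_bounded_below (x y : UnitAddCircle) (ε : ℝ) (hε : 0 < ε)
    (h : ∀ n : ℕ, ε ≤ |dist ((fun t : UnitAddCircle => (3 : ℕ) • t)^[n] x)
      ((fun t : UnitAddCircle => (3 : ℕ) • t)^[n] y) - 1/3|)
    (hxy : 1/4 ≤ dist x y) :
    ∀ n : ℕ, 1 ≤ n → 3 * ε ≤ dist ((fun t : UnitAddCircle => (3 : ℕ) • t)^[n] x)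
      ((fun t : UnitAddCircle => (3 : ℕ) • t)^[n] y) := by
  intro n hn
  induction n with
  | zero => omega
  | succ m ih =>
    set f : UnitAddCircle → UnitAddCircle := fun t => (3 : ℕ) • t with hf
    have hiter : ∀ z : UnitAddCircle, f^[m+1] z = (3:ℕ) • (f^[m] z) := by
      intro z
      rw [Function.iterate_succ_apply']
    rw [hiter x, hiter y]
    set a := f^[m] x
    set b := f^[m] y
    have hm := h m
    rcases lt_or_ge (dist a b) (1/6) with hcase | hcase
    · -- dist grows by factor 3
      have hstep := step2 a b hcase
      rcases Nat.eq_zero_or_pos m with rfl | hm1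
      · have hab : dist a b = dist x y := by simp [a, b]
        linarith
      · have := ih hm1
        linarith
    · have hstep := step1 a b hcase
      have : 3 * ε ≤ |3 * dist a b - 1| := by
        rcases abs_cases (dist a b - 1/3) with ⟨h1, h2⟩ | ⟨h1, h2⟩ <;>
          rcases abs_cases (3 * dist a b - 1) with ⟨h3, h4⟩ | ⟨h3, h4⟩ <;>
          linarith
      linarith
end

section
/- Let f : X → X be a continuous map of a compact metric space such that for every nonempty open set U there exists n ≥ 0 with fⁿ(U) = X. If A ⊆ X is a set such that finitely many sets A₀,…,A_{n−1} with A = A₀ ∪ ⋯ ∪ A_{n−1} satisfy f(A_l) ⊆ A_{l+1 mod n} and A is dense in X, then each closure cl(A_l) equals X, i.e., each A_l is dense in X. -/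
/-- Let `f` be a continuous self-map of a compact metric space such that every
nonempty open set eventually covers the whole space. If sets `A 0, …, A (n-1)` are cyclically
mapped into one another by `f` (i.e. `f (A l) ⊆ A ((l+1) % n)`) and their union is dense,
then each `A l` is dense. -/
theorem cyclic_pieces_dense {X : Type*} [MetricSpace X] [CompactSpace X]
    (f : X → X) (hf : Continuous f)
    (hleo : ∀ U : Set X, IsOpen U → U.Nonempty → ∃ n : ℕ, f^[n] '' U = Set.univ)
    (n : ℕ) (hn : 0 < n) (A : ℕ → Set X)
    (hcyc : ∀ l : ℕ, l < n → f '' A l ⊆ A ((l + 1) % n))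
    (hdense : Dense (⋃ l ∈ Set.Iio n, A l)) :
    ∀ l < n, Dense (A l) := by
  rcases isEmpty_or_nonempty X with hX | hX
  · intro l _
    rw [dense_iff_closure_eq]
    exact Subsingleton.elim _ _
  -- f is surjective
  have hsurj : Function.Surjective f := by
    by_contra h
    rw [Function.Surjective] at h
    push_neg at h
    obtain ⟨p, hp⟩ := h
    have hU : IsOpen ({p}ᶜ : Set X) := isOpen_compl_singleton
    have hne : ({p}ᶜ : Set X).Nonempty := ⟨f p, hp p⟩
    obtain ⟨m, hm⟩ := hleo _ hU hne
    have hpmem : p ∈ f^[m] '' ({p}ᶜ : Set X) := hm ▸ Set.mem_univ p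
    obtain ⟨x, hx, hfx⟩ := hpmem
    cases m with
    | zero => exact hx hfx
    | succ k =>
      rw [Function.iterate_succ_apply'] at hfx
      exact hp _ hfx
  -- iterated images of closures
  have key : ∀ m : ℕ, ∀ j, j < n → f^[m] '' closure (A j) ⊆ closure (A ((j + m) % n)) := by
    intro m
    induction m with
    | zero =>
      intro j hj
      simp [Nat.mod_eq_of_lt hj]
    | succ k ih =>
      intro j hj
      rw [Function.iterate_succ', Set.image_comp]
      have hjk : (j + k) % n < n := Nat.mod_lt _ hn
      calc f '' (f^[k] '' closure (A j))
          ⊆ f '' closure (A ((j + k) % n)) := Set.image_mono (ih j hj)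
        _ ⊆ closure (f '' A ((j + k) % n)) := image_closure_subset_closure_image hf
        _ ⊆ closure (A (((j + k) % n + 1) % n)) := closure_mono (hcyc _ hjk)
        _ = closure (A ((j + (k + 1)) % n)) := by rw [Nat.mod_add_mod, Nat.add_assoc]
  -- propagation of fullness
  have step : ∀ i, i < n → closure (A i) = Set.univ → closure (A ((i + 1) % n)) = Set.univ := by
    intro i hi hc
    apply Set.eq_univ_of_univ_subset
    calc Set.univ = f '' Set.univ := by rw [Set.image_univ, hsurj.range_eq]
      _ = f '' closure (A i) := by rw [hc]
      _ ⊆ closure (f '' A i) := image_closure_subset_closure_image hf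
      _ ⊆ closure (A ((i + 1) % n)) := closure_mono (hcyc i hi)
  have prop : ∀ k : ℕ, ∀ i, i < n → closure (A i) = Set.univ →
      closure (A ((i + k) % n)) = Set.univ := by
    intro k
    induction k with
    | zero =>
      intro i hi h
      rwa [Nat.add_zero, Nat.mod_eq_of_lt hi]
    | succ k ih =>
      intro i hi h
      have hs := step _ (Nat.mod_lt _ hn) (ih i hi h)
      rwa [Nat.mod_add_mod, Nat.add_assoc] at hs
  -- Baire: some closure has nonempty interior
  haveI : Nonempty (Fin n) := ⟨⟨0, hn⟩⟩
  have hcover : ⋃ i : Fin n, closure (A (i : ℕ)) = Set.univ := by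
    have h1 : closure (⋃ l ∈ Set.Iio n, A l) = Set.univ := hdense.closure_eq
    rw [(Set.finite_Iio n).closure_biUnion] at h1
    rw [← h1]
    ext x
    simp only [Set.mem_iUnion, Set.mem_Iio]
    exact ⟨fun ⟨i, h⟩ => ⟨i, i.2, h⟩, fun ⟨l, hl, h⟩ => ⟨⟨l, hl⟩, h⟩⟩
  obtain ⟨j, hj⟩ := nonempty_interior_of_iUnion_of_closed
    (fun i : Fin n => isClosed_closure (s := A (i : ℕ))) hcover
  obtain ⟨m, hm⟩ := hleo _ isOpen_interior hj
  have hfull : closure (A (((j : ℕ) + m) % n)) = Set.univ := by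
    apply Set.eq_univ_of_univ_subset
    calc Set.univ = f^[m] '' interior (closure (A (j : ℕ))) := hm.symm
      _ ⊆ f^[m] '' closure (A (j : ℕ)) := Set.image_mono interior_subset
      _ ⊆ closure (A (((j : ℕ) + m) % n)) := key m _ j.2
  intro l hl
  rw [dense_iff_closure_eq]
  have hlt : ((j : ℕ) + m) % n < n := Nat.mod_lt _ hn
  have hp := prop (l + n - ((j : ℕ) + m) % n) _ hlt hfull
  have harith : (((j : ℕ) + m) % n + (l + n - ((j : ℕ) + m) % n)) % n = l := by
    have h2 : ((j : ℕ) + m) % n + (l + n - ((j : ℕ) + m) % n) = l + n := by omega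
    rw [h2, Nat.add_mod_right, Nat.mod_eq_of_lt hl]
  rwa [harith] at hp
end

section
/- Let f : X → X be a continuous map of a nondegenerate compact metric space X such that the forward orbit of some point x₀ is condense in X (meets every nondegenerate subcontinuum). Then for every nondegenerate subcontinuum K ⊆ X, the orbit of K, i.e. ⋃_{n≥0} fⁿ(K), is dense in X. -/
open Set Metric Filter Topology

/-- Boundary bumping: in a continuum, the connected component of a point in a proper closed
subset meets the frontier of that subset. -/
lemma bump {X : Type*} [TopologicalSpace X] [CompactSpace X] [T2Space X] [ConnectedSpace X]
    {A : Set X} (hA : IsClosed A) (hAne : A ≠ Set.univ) {x : X} (hx : x ∈ A) :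
    (connectedComponentIn A x ∩ frontier A).Nonempty := by
  by_contra h
  rw [Set.not_nonempty_iff_eq_empty] at h
  haveI : CompactSpace A := isCompact_iff_compactSpace.mp hA.isCompact
  set a : A := ⟨x, hx⟩ with ha
  have hcc : connectedComponent a = ⋂ U : {U : Set A // IsClopen U ∧ a ∈ U}, (U : Set A) :=
    connectedComponent_eq_iInter_isClopen a
  set F : Set A := (↑) ⁻¹' frontier A with hF
  have hFc : IsCompact F :=
    ((isClosed_frontier.preimage continuous_subtype_val) : IsClosed F).isCompact
  have hdisj : F ∩ ⋂ U : {U : Set A // IsClopen U ∧ a ∈ U}, (U : Set A) = ∅ := by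
    rw [← hcc]
    ext p
    simp only [Set.mem_inter_iff, Set.mem_empty_iff_false, iff_false, not_and]
    intro hpF hpc
    have : (p : X) ∈ connectedComponentIn A x ∩ frontier A := by
      constructor
      · rw [connectedComponentIn_eq_image hx]
        exact ⟨p, hpc, rfl⟩
      · exact hpF
    rw [h] at this
    exact this
  obtain ⟨t, ht⟩ := hFc.elim_finite_subfamily_closed
    (fun U : {U : Set A // IsClopen U ∧ a ∈ U} => (U : Set A))
    (fun U => U.2.1.1) hdisj
  set U : Set A := ⋂ i ∈ t, (i : Set A) with hUdef
  have hU : IsClopen U := isClopen_biInter_finset fun i _ => i.2.1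
  have haU : a ∈ U := Set.mem_iInter₂.mpr fun i _ => i.2.2
  set W : Set X := (↑) '' U with hW
  have hxW : x ∈ W := ⟨a, haU, rfl⟩
  have hWA : W ⊆ A := by rintro w ⟨p, _, rfl⟩; exact p.2
  have hWF : W ∩ frontier A = ∅ := by
    ext w
    simp only [Set.mem_inter_iff, Set.mem_empty_iff_false, iff_false, not_and]
    rintro ⟨p, hpU, rfl⟩ hwf
    have : p ∈ F ∩ U := ⟨hwf, hpU⟩
    rw [ht] at this
    exact this
  have hWint : W ⊆ interior A := by
    intro w hw
    have hwA : w ∈ A := hWA hw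
    have : w ∉ frontier A := fun hf => by
      have : w ∈ W ∩ frontier A := ⟨hw, hf⟩
      rw [hWF] at this; exact this
    rw [hA.frontier_eq] at this
    by_contra hint
    exact this ⟨hwA, hint⟩
  have hWclosed : IsClosed W :=
    ((hU.1.isCompact).image continuous_subtype_val).isClosed
  obtain ⟨V, hVopen, hVU⟩ := isOpen_induced_iff.mp hU.2
  have hWopen : IsOpen W := by
    have : W = V ∩ interior A := by
      apply Set.Subset.antisymm
      · rintro w ⟨p, hpU, rfl⟩
        refine ⟨?_, hWint ⟨p, hpU, rfl⟩⟩
        rw [← hVU] at hpU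
        exact hpU
      · rintro q ⟨hqV, hqint⟩
        have hqA : q ∈ A := interior_subset hqint
        refine ⟨⟨q, hqA⟩, ?_, rfl⟩
        rw [← hVU]
        exact hqV
    rw [this]
    exact hVopen.inter isOpen_interior
  have : W = ∅ ∨ W = Set.univ := isClopen_iff.mp ⟨hWclosed, hWopen⟩
  rcases this with h1 | h2
  · rw [h1] at hxW; exact hxW
  · exact hAne (Set.eq_univ_of_univ_subset (h2 ▸ hWA))

/-- In a nondegenerate continuum, every proper closed ball of positive radius contains a
nondegenerate subcontinuum. -/
lemma exists_small_continuum {X : Type*} [MetricSpace X] [CompactSpace X] [ConnectedSpace X]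
    {z : X} {r : ℝ} (hr : 0 < r) (hne : Metric.closedBall z r ≠ Set.univ) :
    ∃ Z : Set X, IsCompact Z ∧ IsConnected Z ∧ Z.Nontrivial ∧ Z ⊆ Metric.closedBall z r := by
  have hz : z ∈ Metric.closedBall z r := Metric.mem_closedBall_self hr.le
  set Z := connectedComponentIn (Metric.closedBall z r) z with hZ
  have hZsub : Z ⊆ Metric.closedBall z r := connectedComponentIn_subset _ _
  have hZconn : IsConnected Z := isConnected_connectedComponentIn_iff.mpr hz
  have hZclosed : IsClosed Z := by
    apply isClosed_of_closure_subset
    exact IsPreconnected.subset_connectedComponentIn hZconn.isPreconnected.closure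
      (subset_closure (mem_connectedComponentIn hz))
      (closure_minimal hZsub Metric.isClosed_closedBall)
  obtain ⟨y, hyZ, hyfr⟩ := bump Metric.isClosed_closedBall hne hz
  have hysphere : dist y z = r := Metric.frontier_closedBall_subset_sphere hyfr
  have hyz : y ≠ z := fun h => by rw [h, dist_self] at hysphere; exact hr.ne hysphere
  exact ⟨Z, hZclosed.isCompact, hZconn, ⟨y, hyZ, z, mem_connectedComponentIn hz, hyz⟩, hZsub⟩

/-- If `f : X → X` is a continuous map of a nondegenerate continuum `X` and the
forward orbit of some point `x₀` meets every nondegenerate subcontinuum, then the orbit of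
every nondegenerate subcontinuum `K` is dense in `X`. -/
theorem orbit_of_continuum_dense {X : Type*} [MetricSpace X] [CompactSpace X]
    [ConnectedSpace X] (hX : Nontrivial X) (f : X → X) (hf : Continuous f)
    (x₀ : X)
    (hcond : ∀ Z : Set X, IsCompact Z → IsConnected Z → Z.Nontrivial →
      ∃ n : ℕ, f^[n] x₀ ∈ Z)
    (K : Set X) (hKc : IsCompact K) (hKconn : IsConnected K) (hKnt : K.Nontrivial) :
    Dense (⋃ n : ℕ, f^[n] '' K) := by
  obtain ⟨n₀, hn₀⟩ := hcond K hKc hKconn hKnt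
  -- no isolated points
  have hperfect : ∀ x : X, Filter.NeBot (𝓝[≠] x) := by
    intro x
    rw [Filter.neBot_iff]
    intro hbot
    have hopen : IsOpen ({x} : Set X) := (isOpen_singleton_iff_punctured_nhds x).mpr hbot
    have := isClopen_iff.mp ⟨isClosed_singleton, hopen⟩
    rcases this with h1 | h2
    · exact (Set.singleton_nonempty x).ne_empty h1
    · obtain ⟨a, b, hab⟩ := hX
      exact hab ((h2 ▸ Set.mem_univ a : a ∈ ({x} : Set X)).trans
        (h2 ▸ Set.mem_univ b : b ∈ ({x} : Set X)).symm)
  obtain ⟨a, b, hab⟩ := hX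
  have hD : 0 < dist a b := dist_pos.mpr hab
  rw [Metric.dense_iff]
  intro y ε hε
  -- finite bad set
  set F : Set X := (fun m => f^[m] x₀) '' (Set.Iio n₀) with hFdef
  have hFfin : F.Finite := (Set.finite_Iio n₀).image _
  -- find z in ball y (ε/2) not in F
  have hball_inf : (Metric.ball y (ε/2)).Infinite := by
    haveI := hperfect y
    exact infinite_of_mem_nhds y (Metric.ball_mem_nhds y (by linarith))
  obtain ⟨z, hz⟩ := (hball_inf.diff hFfin).nonempty
  obtain ⟨hzball, hzF⟩ := hz
  -- radius around z avoiding F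
  have hFc : IsClosed F := hFfin.isClosed
  obtain ⟨r₁, hr₁pos, hr₁⟩ := Metric.isOpen_iff.mp hFc.isOpen_compl z hzF
  set r : ℝ := min (min (ε/4) (r₁/2)) (dist a b / 4) with hrdef
  have hrpos : 0 < r := lt_min (lt_min (by linarith) (by linarith)) (by linarith)
  have hrε : r ≤ ε/4 := (min_le_left _ _).trans (min_le_left _ _)
  have hrr₁ : r < r₁ := lt_of_le_of_lt ((min_le_left _ _).trans (min_le_right _ _)) (by linarith)
  have hrD : r ≤ dist a b / 4 := min_le_right _ _
  -- closed ball is proper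
  have hne : Metric.closedBall z r ≠ Set.univ := by
    intro hu
    have haz : a ∈ Metric.closedBall z r := hu ▸ Set.mem_univ a
    have hbz : b ∈ Metric.closedBall z r := hu ▸ Set.mem_univ b
    have : dist a b ≤ dist a z + dist z b := dist_triangle a z b
    rw [Metric.mem_closedBall] at haz hbz
    rw [dist_comm z b] at this
    have : dist a b ≤ 2 * r := by linarith
    linarith
  obtain ⟨Z, hZc, hZconn, hZnt, hZsub⟩ := exists_small_continuum hrpos hne
  -- Z avoids F
  have hZF : ∀ w ∈ Z, w ∉ F := by
    intro w hw hwF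
    have : w ∈ Metric.closedBall z r := hZsub hw
    have : w ∈ Metric.ball z r₁ := Metric.mem_ball.mpr (lt_of_le_of_lt this hrr₁)
    exact (hr₁ this) hwF
  -- Z ⊆ ball y ε
  have hZball : Z ⊆ Metric.ball y ε := by
    intro w hw
    have h1 : dist w z ≤ r := hZsub hw
    have h2 : dist z y < ε/2 := hzball
    calc dist w y ≤ dist w z + dist z y := dist_triangle w z y
      _ < r + ε/2 := by linarith
      _ ≤ ε/4 + ε/2 := by linarith
      _ < ε := by linarith
  obtain ⟨m, hm⟩ := hcond Z hZc hZconn hZnt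
  have hmn₀ : n₀ ≤ m := by
    by_contra hlt
    push_neg at hlt
    exact hZF _ hm ⟨m, hlt, rfl⟩
  refine ⟨f^[m] x₀, hZball hm, ?_⟩
  rw [Set.mem_iUnion]
  refine ⟨m - n₀, ?_⟩
  refine ⟨f^[n₀] x₀, hn₀, ?_⟩
  rw [← Function.iterate_add_apply]
  congr 1
  omega
end

section
/- An indecomposable continuum cannot support a continuous self-map with a condense orbit: if X is an indecomposable nondegenerate continuum and f : X → X is continuous, then no point x ∈ X has an orbit meeting every nondegenerate subcontinuum of X. -/
open Set Topology

/-- In a compact T2 space, if the connected component of `x` is contained in an open set `U`,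
then some clopen set contains `x` and is contained in `U`. -/
lemma exists_isClopen_of_connectedComponent_subset {Y : Type*} [TopologicalSpace Y] [T2Space Y]
    [CompactSpace Y] {x : Y} {U : Set Y} (hU : IsOpen U) (h : connectedComponent x ⊆ U) :
    ∃ Z : Set Y, IsClopen Z ∧ x ∈ Z ∧ Z ⊆ U := by
  have key := connectedComponent_eq_iInter_isClopen x
  have hcomp : IsCompact (Uᶜ) := hU.isClosed_compl.isCompact
  have hempty : Uᶜ ∩ ⋂ (Z : { Z : Set Y // IsClopen Z ∧ x ∈ Z }), (Z : Set Y) = ∅ := by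
    rw [← key, Set.eq_empty_iff_forall_notMem]
    intro z hz
    exact hz.1 (h hz.2)
  obtain ⟨t, ht⟩ := hcomp.elim_finite_subfamily_closed _ (fun Z => Z.2.1.1) hempty
  refine ⟨⋂ i ∈ t, (i : Set Y), isClopen_biInter_finset fun i _ => i.2.1, ?_, ?_⟩
  · exact Set.mem_iInter₂.mpr fun i _ => i.2.2
  · intro z hz
    by_contra hzU
    exact Set.eq_empty_iff_forall_notMem.mp ht z ⟨hzU, hz⟩

/-- The connected component in a closed set is closed. -/
lemma isClosed_connectedComponentIn' {Y : Type*} [TopologicalSpace Y] {s : Set Y}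
    (hs : IsClosed s) (x : Y) : IsClosed (connectedComponentIn s x) := by
  by_cases hx : x ∈ s
  · have h1 : closure (connectedComponentIn s x) ⊆ s :=
      closure_minimal (connectedComponentIn_subset s x) hs
    have h2 : closure (connectedComponentIn s x) ⊆ connectedComponentIn s x :=
      (isPreconnected_connectedComponentIn).closure.subset_connectedComponentIn
        (subset_closure (mem_connectedComponentIn hx)) h1
    exact isClosed_of_closure_subset h2
  · rw [connectedComponentIn_eq_empty hx]; exact isClosed_empty

/-- Boundary bumping: in a compact connected T2 space, the connected component in `Uᶜ` of a
point `p` outside the closure of a nonempty open set `U` meets `closure U`. -/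
lemma connectedComponentIn_inter_closure_nonempty {Y : Type*} [TopologicalSpace Y] [T2Space Y]
    [CompactSpace Y] [ConnectedSpace Y] {U : Set Y} (hU : IsOpen U) (hne : U.Nonempty)
    {p : Y} (hp : p ∉ closure U) :
    (connectedComponentIn Uᶜ p ∩ closure U).Nonempty := by
  by_contra hcon
  rw [Set.not_nonempty_iff_eq_empty] at hcon
  have hCU : connectedComponentIn Uᶜ p ⊆ (closure U)ᶜ := fun z hz hz2 =>
    Set.eq_empty_iff_forall_notMem.mp hcon z ⟨hz, hz2⟩
  have hpU : p ∈ Uᶜ := fun h => hp (subset_closure h)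
  haveI : CompactSpace (Uᶜ : Set Y) := isCompact_iff_compactSpace.mp hU.isClosed_compl.isCompact
  have himg : connectedComponentIn Uᶜ p = (↑) '' connectedComponent (⟨p, hpU⟩ : (Uᶜ : Set Y)) :=
    connectedComponentIn_eq_image hpU
  have hsub : connectedComponent (⟨p, hpU⟩ : (Uᶜ : Set Y)) ⊆
      ((↑) : (Uᶜ : Set Y) → Y) ⁻¹' (closure U)ᶜ := by
    intro z hz
    exact hCU (himg ▸ Set.mem_image_of_mem _ hz)
  obtain ⟨Z, hZclopen, hpZ, hZsub⟩ := exists_isClopen_of_connectedComponent_subset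
    (isClosed_closure.isOpen_compl.preimage continuous_subtype_val) hsub
  set W : Set Y := (↑) '' Z with hW
  have hWclosed : IsClosed W :=
    (hZclopen.isClosed.isCompact.image continuous_subtype_val).isClosed
  have hWsub : W ⊆ (closure U)ᶜ := by
    rintro _ ⟨z, hz, rfl⟩; exact hZsub hz
  have hWopen : IsOpen W := by
    obtain ⟨O, hO, hOZ⟩ := isOpen_induced_iff.mp hZclopen.isOpen
    have h1 : W = Uᶜ ∩ O := by
      rw [hW, ← hOZ, Subtype.image_preimage_coe]
    have h2 : W = O ∩ (closure U)ᶜ := by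
      apply Set.Subset.antisymm
      · exact Set.subset_inter (fun w hw => (h1 ▸ hw).2) hWsub
      · intro w hw
        rw [h1]
        exact ⟨Set.compl_subset_compl.mpr subset_closure hw.2, hw.1⟩
    rw [h2]
    exact hO.inter isClosed_closure.isOpen_compl
  rcases isClopen_iff.mp ⟨hWclosed, hWopen⟩ with h | h
  · exact Set.eq_empty_iff_forall_notMem.mp h p ⟨⟨p, hpU⟩, hpZ, rfl⟩
  · obtain ⟨q, hq⟩ := hne
    exact hWsub (h ▸ Set.mem_univ q) (subset_closure hq)

/-- An indecomposable nondegenerate continuum cannot support a continuous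
self-map with a condense orbit. -/
theorem indecomposable_no_condense_orbit {X : Type*} [MetricSpace X] [CompactSpace X]
    [ConnectedSpace X] (hX : Nontrivial X)
    (hindec : ¬ ∃ A B : Set X, IsCompact A ∧ IsConnected A ∧ A ≠ Set.univ ∧
      IsCompact B ∧ IsConnected B ∧ B ≠ Set.univ ∧ A ∪ B = Set.univ)
    (f : X → X) (hf : Continuous f) :
    ¬ ∃ x : X, ∀ Z : Set X, IsCompact Z → IsConnected Z → Z.Nontrivial →
      ∃ n : ℕ, f^[n] x ∈ Z := by
  classical
  rintro ⟨x, hx⟩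
  haveI : Nonempty X := hX.to_nonempty
  -- Step 1: proper closed preconnected subsets have empty interior (indecomposability).
  have emptyInt : ∀ L : Set X, IsClosed L → IsPreconnected L → L ≠ Set.univ →
      interior L = ∅ := by
    intro L hLc hLp hLne
    by_contra hI
    obtain ⟨z, hz⟩ := Set.nonempty_iff_ne_empty.mpr hI
    have hzL : z ∈ L := interior_subset hz
    have hDc : IsClosed (closure Lᶜ) := isClosed_closure
    have hDne : (closure Lᶜ).Nonempty := (Set.nonempty_compl.mpr hLne).mono subset_closure
    have hzD : z ∉ closure Lᶜ := by
      rw [closure_compl]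
      exact fun h => h hz
    have hDneuniv : closure Lᶜ ≠ Set.univ := fun h => hzD (h ▸ Set.mem_univ z)
    have hunion : L ∪ closure Lᶜ = Set.univ := by
      rw [Set.eq_univ_iff_forall]
      intro w
      by_cases hw : w ∈ L
      · exact Or.inl hw
      · exact Or.inr (subset_closure hw)
    by_cases hDp : IsPreconnected (closure Lᶜ)
    · exact hindec ⟨L, closure Lᶜ, hLc.isCompact, ⟨⟨z, hzL⟩, hLp⟩, hLne,
        hDc.isCompact, ⟨hDne, hDp⟩, hDneuniv, hunion⟩
    · rw [isPreconnected_iff_subset_of_fully_disjoint_closed hDc] at hDp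
      push_neg at hDp
      obtain ⟨F1, F2, hF1, hF2, hDsub, hdisj, hnot1, hnot2⟩ := hDp
      have hD12 : (closure Lᶜ ∩ F1) ∪ (closure Lᶜ ∩ F2) = closure Lᶜ := by
        apply Set.Subset.antisymm
          (Set.union_subset Set.inter_subset_left Set.inter_subset_left)
        intro w hw
        rcases hDsub hw with h | h
        exacts [Or.inl ⟨hw, h⟩, Or.inr ⟨hw, h⟩]
      have hD1D2 : (closure Lᶜ ∩ F1) ∩ (closure Lᶜ ∩ F2) = ∅ := by
        rw [Set.eq_empty_iff_forall_notMem]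
        rintro w ⟨⟨_, h1⟩, ⟨_, h2⟩⟩
        exact Set.disjoint_left.mp hdisj h1 h2
      have houtside : ∀ Fa Fb : Set X, IsClosed Fa → closure Lᶜ ⊆ Fa ∪ Fb →
          ¬ closure Lᶜ ⊆ Fa → ((closure Lᶜ ∩ Fb) ∩ Lᶜ).Nonempty := by
        intro Fa Fb hFa hsub hnot
        obtain ⟨w, hwD, hwFa⟩ := Set.not_subset.mp hnot
        obtain ⟨y, hyFa, hyL⟩ := mem_closure_iff.mp hwD Faᶜ hFa.isOpen_compl hwFa
        have hyD : y ∈ closure Lᶜ := subset_closure hyL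
        rcases hsub hyD with h | h
        · exact absurd h hyFa
        · exact ⟨y, ⟨hyD, h⟩, hyL⟩
      have hD2L := houtside F1 F2 hF1 hDsub hnot1
      have hD1L := houtside F2 F1 hF2 (by rwa [Set.union_comm] at hDsub) hnot2
      -- main helper: `L ∪ E1` is a proper subcontinuum
      have hmain : ∀ E1 E2 : Set X, IsClosed E1 → IsClosed E2 → E1 ∪ E2 = closure Lᶜ →
          E1 ∩ E2 = ∅ → (E2 ∩ Lᶜ).Nonempty →
          IsConnected (L ∪ E1) ∧ L ∪ E1 ≠ Set.univ := by
        intro E1 E2 hE1 hE2 hED hE12 hyout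
        obtain ⟨y, hyE2, hyL⟩ := hyout
        have hA : IsClosed (L ∪ E1) := hLc.union hE1
        have hcover : (L ∪ E1) ∪ E2 = Set.univ := by
          rw [Set.union_assoc, hED, hunion]
        have hyA : y ∉ L ∪ E1 := by
          rintro (h | h)
          · exact hyL h
          · exact Set.eq_empty_iff_forall_notMem.mp hE12 y ⟨h, hyE2⟩
        have key : ∀ F1' F2' : Set X, IsClosed F1' → IsClosed F2' → (L ∪ E1) ⊆ F1' ∪ F2' →
            Disjoint F1' F2' → L ⊆ F1' → (L ∪ E1) ⊆ F1' := by
          intro G1 G2 hG1 hG2 hsub hdj hLG1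
          have hGE1 : (L ∪ E1) ∩ G2 ⊆ E1 := by
            rintro w ⟨hwA, hwG2⟩
            rcases hwA with h | h
            · exact absurd hwG2 (Set.disjoint_left.mp hdj (hLG1 h))
            · exact h
          have hGcompl : ((L ∪ E1) ∩ G2)ᶜ = ((L ∪ E1) ∩ G1) ∪ (L ∪ E2) := by
            apply Set.Subset.antisymm
            · intro w hw
              have hwX : w ∈ (L ∪ E1) ∪ E2 := hcover ▸ Set.mem_univ w
              rcases hwX with h | h
              · rcases hsub h with h1 | h2
                · exact Or.inl ⟨h, h1⟩
                · exact absurd (⟨h, h2⟩ : w ∈ (L ∪ E1) ∩ G2) hw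
              · exact Or.inr (Or.inr h)
            · rintro w (⟨_, hwG1⟩ | (h | h)) hwG
              · exact Set.disjoint_left.mp hdj hwG1 hwG.2
              · exact Set.disjoint_left.mp hdj (hLG1 h) hwG.2
              · exact Set.eq_empty_iff_forall_notMem.mp hE12 w ⟨hGE1 hwG, h⟩
          have hGopen : IsOpen ((L ∪ E1) ∩ G2) := by
            rw [← isClosed_compl_iff, hGcompl]
            exact (hA.inter hG1).union (hLc.union hE2)
          rcases isClopen_iff.mp ⟨hA.inter hG2, hGopen⟩ with hG | hG
          · intro w hw
            rcases hsub hw with h | h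
            · exact h
            · exact absurd (⟨hw, h⟩ : w ∈ (L ∪ E1) ∩ G2)
                (Set.eq_empty_iff_forall_notMem.mp hG w)
          · exfalso
            exact hyA ((hG ▸ Set.mem_univ y : y ∈ (L ∪ E1) ∩ G2)).1
        have hApre : IsPreconnected (L ∪ E1) := by
          rw [isPreconnected_iff_subset_of_fully_disjoint_closed hA]
          intro G1 G2 hG1 hG2 hsub hdj
          have hLsub : L ⊆ G1 ∪ G2 := Set.subset_union_left.trans hsub
          rcases (isPreconnected_iff_subset_of_fully_disjoint_closed hLc).mp hLp G1 G2
            hG1 hG2 hLsub hdj with h | h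
          · exact Or.inl (key G1 G2 hG1 hG2 hsub hdj h)
          · exact Or.inr (key G2 G1 hG2 hG1 (by rwa [Set.union_comm G2 G1]) hdj.symm h)
        exact ⟨⟨⟨z, Or.inl hzL⟩, hApre⟩, fun h => hyA (h ▸ Set.mem_univ y)⟩
      obtain ⟨hA, hAne⟩ := hmain (closure Lᶜ ∩ F1) (closure Lᶜ ∩ F2)
        (hDc.inter hF1) (hDc.inter hF2) hD12 hD1D2 hD2L
      obtain ⟨hB, hBne⟩ := hmain (closure Lᶜ ∩ F2) (closure Lᶜ ∩ F1)
        (hDc.inter hF2) (hDc.inter hF1) (by rw [Set.union_comm]; exact hD12)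
        (by rw [Set.inter_comm]; exact hD1D2) hD1L
      refine hindec ⟨L ∪ (closure Lᶜ ∩ F1), L ∪ (closure Lᶜ ∩ F2),
        (hLc.union (hDc.inter hF1)).isCompact, hA, hAne,
        (hLc.union (hDc.inter hF2)).isCompact, hB, hBne, ?_⟩
      rw [← Set.union_union_distrib_left, hD12, hunion]
  -- Step 2: countable family of proper subcontinua covering X.
  haveI : TopologicalSpace.SeparableSpace X := by infer_instance
  set u : ℕ → X := TopologicalSpace.denseSeq X with hu
  have hud : DenseRange u := TopologicalSpace.denseRange_denseSeq X
  set L : ℕ × ℕ × ℕ → Set X := fun nmk =>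
    connectedComponentIn (Metric.ball (u nmk.2.1) (1/((nmk.2.2 : ℝ)+1)))ᶜ (f^[nmk.1] x)
    with hLdef
  have hLclosed : ∀ i, IsClosed (L i) := fun i =>
    isClosed_connectedComponentIn' Metric.isOpen_ball.isClosed_compl _
  have hLcover : ⋃ i, L i = Set.univ := by
    rw [Set.eq_univ_iff_forall]
    intro p
    obtain ⟨q, hq⟩ := exists_ne p
    have hd : 0 < dist p q := dist_pos.mpr (Ne.symm hq)
    obtain ⟨m, hm⟩ := Metric.denseRange_iff.mp hud q (dist p q / 4) (by linarith)
    obtain ⟨k, hk⟩ := exists_nat_one_div_lt (show (0:ℝ) < dist p q / 4 by linarith)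
    have hr : (0:ℝ) < 1/((k : ℝ)+1) := by positivity
    have hpfar : dist p (u m) > 1/((k : ℝ)+1) := by
      have h1 : dist p q ≤ dist p (u m) + dist (u m) q := dist_triangle _ _ _
      have h2 : dist (u m) q = dist q (u m) := dist_comm _ _
      linarith
    have hpB : p ∉ closure (Metric.ball (u m) (1/((k : ℝ)+1))) := by
      intro h
      have h2 := Metric.closure_ball_subset_closedBall h
      rw [Metric.mem_closedBall] at h2
      linarith
    have hpBc : p ∈ (Metric.ball (u m) (1/((k : ℝ)+1)))ᶜ := fun h => hpB (subset_closure h)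
    have hBne : (Metric.ball (u m) (1/((k : ℝ)+1))).Nonempty := ⟨_, Metric.mem_ball_self hr⟩
    obtain ⟨y, hyC, hyB⟩ := connectedComponentIn_inter_closure_nonempty
      Metric.isOpen_ball hBne hpB
    have hpC : p ∈ connectedComponentIn (Metric.ball (u m) (1/((k : ℝ)+1)))ᶜ p :=
      mem_connectedComponentIn hpBc
    have hyp : y ≠ p := fun h => hpB (h ▸ hyB)
    have hCclosed : IsClosed (connectedComponentIn (Metric.ball (u m) (1/((k : ℝ)+1)))ᶜ p) :=
      isClosed_connectedComponentIn' Metric.isOpen_ball.isClosed_compl _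
    obtain ⟨n, hn⟩ := hx _ hCclosed.isCompact ⟨⟨p, hpC⟩, isPreconnected_connectedComponentIn⟩
      ⟨y, hyC, p, hpC, hyp⟩
    refine Set.mem_iUnion.mpr ⟨⟨n, m, k⟩, ?_⟩
    have hCsub : connectedComponentIn (Metric.ball (u m) (1/((k : ℝ)+1)))ᶜ p ⊆
        connectedComponentIn (Metric.ball (u m) (1/((k : ℝ)+1)))ᶜ (f^[n] x) :=
      isPreconnected_connectedComponentIn.subset_connectedComponentIn hn
        (connectedComponentIn_subset _ _)
    exact hCsub hpC
  obtain ⟨i, hi⟩ := nonempty_interior_of_iUnion_of_closed hLclosed hLcover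
  have hLneuniv : L i ≠ Set.univ := by
    intro h
    have hmem : u i.2.1 ∈ L i := h ▸ Set.mem_univ _
    exact connectedComponentIn_subset _ _ hmem (Metric.mem_ball_self (by positivity))
  rw [emptyInt (L i) (hLclosed i) isPreconnected_connectedComponentIn hLneuniv] at hi
  exact Set.not_nonempty_empty hi
end

section
/- If two sequences of compact convex subsets Aᵢ, Bᵢ of ℂ both converge in the Hausdorff metric to the same compact convex set C with nonempty interior, then for all sufficiently large i, Aᵢ ∩ Bᵢ ≠ ∅. -/
/-! A closed convex set `S` missing a point `z` is separated from it by a functional `f`; moving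
from `z` a distance `r` in a direction where `f` grows almost at rate `‖f‖` reaches a point
that stays at distance `≥ ε` from `S` as long as `ε < r`. So a closed convex set that comes
`ε`-close to every point of a ball of radius `r > ε` contains its center. If `C` contains a ball
of radius `r` around `z`, every such set Hausdorff-closer than `ε` to `C` therefore contains `z`,
and for large `i` this applies to both `Aᵢ` and `Bᵢ`. -/

open Metric

variable {E : Type*} [NormedAddCommGroup E] [NormedSpace ℝ E]

theorem StrongDual.exists_norm_lt_one_lt_apply (f : StrongDual ℝ E) {c : ℝ} (hc : c < ‖f‖) :
    ∃ x : E, ‖x‖ < 1 ∧ c < f x := by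
  obtain ⟨x, hx, hcx⟩ := f.exists_lt_apply_of_lt_opNorm hc
  rcases le_or_gt 0 (f x) with hfx | hfx
  · exact ⟨x, hx, by rwa [Real.norm_of_nonneg hfx] at hcx⟩
  · exact ⟨-x, by rwa [norm_neg], by rwa [Real.norm_of_nonpos hfx.le, ← map_neg] at hcx⟩

theorem Convex.mem_of_closedBall_subset_thickening {S : Set E} (hS : Convex ℝ S)
    (hSc : IsClosed S) {z : E} {r ε : ℝ} (hε : 0 < ε) (hεr : ε < r)
    (hball : closedBall z r ⊆ Metric.thickening ε S) : z ∈ S := by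
  by_contra hz
  obtain ⟨f, u, hfS, hfz⟩ := geometric_hahn_banach_closed_point hS hSc hz
  have hr : 0 < r := hε.trans hεr
  obtain ⟨s₀, hs₀, -⟩ := mem_thickening_iff.mp (hball (mem_closedBall_self hr.le))
  have hf : 0 < ‖f‖ := by
    refine norm_pos_iff.mpr fun hf0 => ?_
    have := hfS s₀ hs₀
    simp only [hf0, zero_apply] at this hfz
    linarith
  obtain ⟨x, hx, hfx⟩ := f.exists_norm_lt_one_lt_apply
    (c := ε / r * ‖f‖) (mul_lt_of_lt_one_left hf ((div_lt_one hr).mpr hεr))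
  have hp : z + r • x ∈ closedBall z r := by
    rw [mem_closedBall, dist_self_add_left, norm_smul, Real.norm_of_nonneg hr.le]
    exact mul_le_of_le_one_right hr.le hx.le
  obtain ⟨s, hs, hps⟩ := mem_thickening_iff.mp (hball hp)
  have hrise : ε * ‖f‖ < f (z + r • x - s) := by
    have hrx : ε * ‖f‖ < r * f x := by
      calc ε * ‖f‖ = r * (ε / r * ‖f‖) := by field_simp
        _ < r * f x := mul_lt_mul_of_pos_left hfx hr
    rw [map_sub, map_add, map_smul, smul_eq_mul]
    linarith [hfS s hs]
  have hlip : f (z + r • x - s) < ε * ‖f‖ :=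
    calc f (z + r • x - s) ≤ ‖f (z + r • x - s)‖ := Real.le_norm_self _
      _ ≤ ‖f‖ * dist (z + r • x) s := by rw [dist_eq_norm]; exact f.le_opNorm _
      _ < ε * ‖f‖ := by rw [mul_comm ε]; exact mul_lt_mul_of_pos_left hps hf
  exact hlip.not_gt hrise

theorem Metric.subset_thickening_of_hausdorffDist_lt {X : Type*} [PseudoMetricSpace X]
    {s t : Set X} {ε : ℝ} (h : hausdorffDist s t < ε) (hfin : hausdorffEDist s t ≠ ⊤) :
    t ⊆ thickening ε s := fun y hy => by
  obtain ⟨x, hx, hxy⟩ := exists_dist_lt_of_hausdorffDist_lt' hy h hfin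
  exact mem_thickening_iff.mpr ⟨x, hx, by rwa [dist_comm]⟩

theorem Convex.mem_of_hausdorffDist_lt_of_closedBall_subset {S C : Set E} (hS : Convex ℝ S)
    (hSc : IsClosed S) (hSb : Bornology.IsBounded S) (hSne : S.Nonempty)
    (hCb : Bornology.IsBounded C) {z : E} {r ε : ℝ} (hεr : ε < r) (hzC : closedBall z r ⊆ C)
    (hSC : hausdorffDist S C < ε) : z ∈ S := by
  have hCne : C.Nonempty := ⟨z, hzC (mem_closedBall_self ((hausdorffDist_nonneg.trans_lt
    (hSC.trans hεr)).le))⟩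
  have hfin := hausdorffEDist_ne_top_of_nonempty_of_bounded hSne hCne hSb hCb
  exact hS.mem_of_closedBall_subset_thickening hSc (hausdorffDist_nonneg.trans_lt hSC) hεr
    (hzC.trans (subset_thickening_of_hausdorffDist_lt hSC hfin))

theorem convex_hausdorff_limits_eventually_intersect_general
    (A B : ℕ → Set ℂ) (C : Set ℂ)
    (hAcomp : ∀ i, IsCompact (A i)) (hAconv : ∀ i, Convex ℝ (A i)) (hAne : ∀ i, (A i).Nonempty)
    (hBcomp : ∀ i, IsCompact (B i)) (hBconv : ∀ i, Convex ℝ (B i)) (hBne : ∀ i, (B i).Nonempty)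
    (hCcomp : IsCompact C) (hCint : (interior C).Nonempty)
    (hA : Filter.Tendsto (fun i => Metric.hausdorffDist (A i) C) Filter.atTop (nhds 0))
    (hB : Filter.Tendsto (fun i => Metric.hausdorffDist (B i) C) Filter.atTop (nhds 0)) :
    ∃ N : ℕ, ∀ i ≥ N, (A i ∩ B i).Nonempty := by
  obtain ⟨z, hz⟩ := hCint
  obtain ⟨r, hr, hzC⟩ := nhds_basis_closedBall.mem_iff.mp
    (mem_interior_iff_mem_nhds.mp hz)
  have hεr : r / 2 < r := half_lt_self hr
  obtain ⟨N, hN⟩ := ((hA.eventually (gt_mem_nhds (half_pos hr))).and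
    (hB.eventually (gt_mem_nhds (half_pos hr)))).exists_forall_of_atTop
  refine ⟨N, fun i hi => ⟨z, ?_, ?_⟩⟩
  · exact (hAconv i).mem_of_hausdorffDist_lt_of_closedBall_subset (hAcomp i).isClosed
      (hAcomp i).isBounded (hAne i) hCcomp.isBounded hεr hzC (hN i hi).1
  · exact (hBconv i).mem_of_hausdorffDist_lt_of_closedBall_subset (hBcomp i).isClosed
      (hBcomp i).isBounded (hBne i) hCcomp.isBounded hεr hzC (hN i hi).2

/-- If two sequences of nonempty compact convex subsets of ℂ both converge in the
Hausdorff metric to the same compact convex set `C` with nonempty interior, then for all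
sufficiently large `i` the two sets intersect. -/
theorem convex_hausdorff_limits_eventually_intersect
    (A B : ℕ → Set ℂ) (C : Set ℂ)
    (hAcomp : ∀ i, IsCompact (A i)) (hAconv : ∀ i, Convex ℝ (A i)) (hAne : ∀ i, (A i).Nonempty)
    (hBcomp : ∀ i, IsCompact (B i)) (hBconv : ∀ i, Convex ℝ (B i)) (hBne : ∀ i, (B i).Nonempty)
    (hCcomp : IsCompact C) (hCconv : Convex ℝ C) (hCint : (interior C).Nonempty)
    (hA : Filter.Tendsto (fun i => Metric.hausdorffDist (A i) C) Filter.atTop (nhds 0))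
    (hB : Filter.Tendsto (fun i => Metric.hausdorffDist (B i) C) Filter.atTop (nhds 0)) :
    ∃ N : ℕ, ∀ i ≥ N, (A i ∩ B i).Nonempty :=
  convex_hausdorff_limits_eventually_intersect_general A B C hAcomp hAconv hAne hBcomp hBconv hBne
    hCcomp hCint hA hB
end
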